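/- arXiv:2409.08200 — 7 statements merged into one kernel-verified Lean document; each statement's English description precedes it below -/
import Mathlib

section
/- Every extended Boolean function z on a finite set I admits a factorization z = z₁ · z₂ ⋯ z_r into indecomposable extended Boolean functions, and this factorization is unique: the underlying partition I = I₁ ⊔ ⋯ ⊔ I_r is uniquely determined (and then z_i is the restriction of z to subsets of I_i). -/
open scoped Classical

/-- A preorder on `X`, bundled as a reflexive and transitive relation. -/
structure Preo (X : Type*) where
  le : X → X → Prop
  le_refl : ∀ x, le x x
  le_trans : ∀ {x y z}, le x y → le y z → le x z

namespace Preo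

variable {X : Type*}

/-- The refinement partial order `P ⪯ Q` on preorders: `x ≤_P y` implies `x ≤_Q y`. -/
def Le (P Q : Preo X) : Prop := ∀ ⦃a b⦄, P.le a b → Q.le a b

/-- The opposite preorder. -/
def op (P : Preo X) : Preo X where
  le a b := P.le b a
  le_refl x := P.le_refl x
  le_trans h h' := P.le_trans h' h

/-- The meet (pointwise intersection) of two preorders. -/
def meet (P Q : Preo X) : Preo X where
  le a b := P.le a b ∧ Q.le a b
  le_refl x := ⟨P.le_refl x, Q.le_refl x⟩
  le_trans h h' := ⟨P.le_trans h.1 h'.1, Q.le_trans h.2 h'.2⟩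

/-- The join of two preorders: zigzag chains, i.e. the reflexive-transitive closure
of the union of the two relations. -/
def join (P Q : Preo X) : Preo X where
  le a b := Relation.ReflTransGen (fun u v => P.le u v ∨ Q.le u v) a b
  le_refl _ := Relation.ReflTransGen.refl
  le_trans h h' := Relation.ReflTransGen.trans h h'

/-- The bubble relation: `a` and `b` lie in the same bubble of `P`. -/
def bubRel (P : Preo X) (a b : X) : Prop := P.le a b ∧ P.le b a

/-- `R ◁ P` : `R` is a subdivision of `P`, i.e. `R ⪯ P` and `R = P ∧ (P^op ∨ R)`. -/
def Subdiv (R P : Preo X) : Prop := R.Le P ∧ R = P.meet (P.op.join R)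

/-- `P ◀ Q` : `Q` is a contraction of `P`, i.e. `P ⪯ Q` and `Q = P ∨ (P^op ∧ Q)`. -/
def Contr (P Q : Preo X) : Prop := P.Le Q ∧ Q = P.join (P.op.meet Q)

/-- `K` is a convex subset for the preorder `P`. -/
def ConvexIn (P : Preo X) (K : Set X) : Prop :=
  ∀ ⦃x y z⦄, x ∈ K → y ∈ K → P.le x z → P.le z y → z ∈ K

/-- `K` is connected for (the restriction to `K` of) the preorder `P`:
any two of its elements are joined by a zigzag chain of comparabilities within `K`. -/
def ConnectedIn (P : Preo X) (K : Set X) : Prop :=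
  ∀ ⦃x y⦄, x ∈ K → y ∈ K →
    Relation.ReflTransGen (fun u v => u ∈ K ∧ v ∈ K ∧ (P.le u v ∨ P.le v u)) x y

/-- A total preorder. -/
def Total (P : Preo X) : Prop := ∀ a b, P.le a b ∨ P.le b a

/-- `L` is a linear extension of `P`: `L` is total, `P ⪯ L`, and the bubbles coincide. -/
def IsLinExt (P L : Preo X) : Prop :=
  L.Total ∧ P.Le L ∧ ∀ a b, P.bubRel a b ↔ L.bubRel a b

/-- A finite down-set of the preorder `P`. -/
def IsDownset (P : Preo X) (A : Finset X) : Prop :=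
  ∀ ⦃x y⦄, y ∈ A → P.le x y → x ∈ A

/-- A convex finite subset of the preorder `P`. -/
def ConvexF (P : Preo X) (C : Finset X) : Prop :=
  ∀ ⦃x y z⦄, x ∈ C → y ∈ C → P.le x z → P.le z y → z ∈ C

/-- The down-set generated by a finite set `C`. -/
noncomputable def downClosure [Fintype X] (P : Preo X) (C : Finset X) : Finset X :=
  Finset.univ.filter (fun x => ∃ y ∈ C, P.le x y)

/-- The bubble of an element `a`. -/
noncomputable def bubble [Fintype X] (P : Preo X) (a : X) : Finset X :=
  Finset.univ.filter (fun x => P.le a x ∧ P.le x a)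

/-- The set of bubbles of `P`. -/
noncomputable def bubbles [Fintype X] (P : Preo X) : Finset (Finset X) :=
  Finset.univ.image (fun a => P.bubble a)

/-- `R` is a positive sub-preorder of `P`: in any loop
`x = x₀ ≤_R x₁ ≥_P x₂ ≤_R ⋯ ≤_R x_{2k-1} ≥_P x_{2k} = x`,
every descending step `≥_P` is actually `≥_R`. -/
def PositiveSub (R P : Preo X) : Prop :=
  ∀ (k : ℕ) (x : ℕ → X), x (2 * k) = x 0 →
    (∀ i < k, R.le (x (2 * i)) (x (2 * i + 1))) →
    (∀ i < k, P.le (x (2 * i + 2)) (x (2 * i + 1))) →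
    ∀ i < k, R.le (x (2 * i + 2)) (x (2 * i + 1))

end Preo

section Submod

variable {I : Type*} [Fintype I] [DecidableEq I]

/-- A function `z : P(I) → ℝ ∪ {∞}` is submodular if
`z(S ∪ T) + z(S ∩ T) ≤ z(S) + z(T)` for all `S, T`. -/
def Submodular (z : Finset I → WithTop ℝ) : Prop :=
  ∀ S T : Finset I, z (S ∪ T) + z (S ∩ T) ≤ z S + z T

/-- The corestriction `z_{/A}` : `U ↦ z(A ∪ U) − z(A)` (meaningful when `z A ≠ ⊤`). -/
noncomputable def coRes (z : Finset I → WithTop ℝ) (A U : Finset I) : WithTop ℝ :=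
  z (A ∪ U) + ((-(z A).untopD 0 : ℝ) : WithTop ℝ)

/-- The extended generalized permutahedron of `z`:
`x_I = z(I)` and `x_A ≤ z(A)` whenever `z(A) < ∞`. -/
def EGP (z : Finset I → WithTop ℝ) : Set (I → ℝ) :=
  {x | ((∑ i, x i : ℝ) : WithTop ℝ) = z Finset.univ ∧
       ∀ A : Finset I, ((∑ i ∈ A, x i : ℝ) : WithTop ℝ) ≤ z A}

/-- `z` restricted to subsets of `C` decomposes as the product of its restrictions to `S`
and `T`, where `C = S ⊔ T`. -/
def SplitsAlong (z : Finset I → WithTop ℝ) (C S T : Finset I) : Prop :=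
  Disjoint S T ∧ S ∪ T = C ∧ ∀ E ⊆ C, z E = z (E ∩ S) + z (E ∩ T)

/-- `z` restricted to subsets of `C` is indecomposable. -/
def IndecompOn (z : Finset I → WithTop ℝ) (C : Finset I) : Prop :=
  ∀ S T : Finset I, S.Nonempty → T.Nonempty → ¬ SplitsAlong z C S T

/-- `fam` is the partition underlying a factorization of `z` into indecomposable
extended Boolean functions. -/
def IsIndecompFactorization (z : Finset I → WithTop ℝ) (fam : Finset (Finset I)) : Prop :=
  (∀ B ∈ fam, B.Nonempty) ∧
  (∀ B ∈ fam, ∀ B' ∈ fam, B ≠ B' → Disjoint B B') ∧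
  fam.sup id = Finset.univ ∧
  (∀ E : Finset I, z E = ∑ B ∈ fam, z (E ∩ B)) ∧
  ∀ B ∈ fam, IndecompOn z B

/-- A family of finite subsets of `I` forming a topology on `I`. -/
def IsTopologyFam (F : Set (Finset I)) : Prop :=
  ∅ ∈ F ∧ Finset.univ ∈ F ∧ (∀ A ∈ F, ∀ B ∈ F, A ∪ B ∈ F) ∧ ∀ A ∈ F, ∀ B ∈ F, A ∩ B ∈ F

/-- The preorder `P` is compatible with the submodular function `z`. -/
def Compatible (z : Finset I → WithTop ℝ) (P : Preo I) : Prop :=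
  (∀ A : Finset I, P.IsDownset A → z A ≠ ⊤) ∧
  ∀ A B : Finset I, P.IsDownset A → P.IsDownset B → A ⊆ B →
    ∀ C₁ C₂ : Finset I, Disjoint C₁ C₂ → C₁ ∪ C₂ = B \ A →
      (∀ x ∈ C₁, ∀ y ∈ C₂, ¬ P.le x y ∧ ¬ P.le y x) →
      ∀ U ⊆ B \ A, coRes z A U = coRes z A (U ∩ C₁) + coRes z A (U ∩ C₂)

/-- For a convex subset `C` of `P`, the function `z_C : U ↦ z(A ∪ U) − z(A)`, where
`A = (↓C) \ C` with `↓C` the down-set generated by `C`. -/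
noncomputable def zConv (z : Finset I → WithTop ℝ) (P : Preo I) (C U : Finset I) :
    WithTop ℝ :=
  coRes z (P.downClosure C \ C) U

/-- The preorder `P` conforms to the submodular function `z`: it is compatible with `z`
and every product decomposition of `z_C`, for `C` convex in `P`, comes from a
disconnected decomposition of the preorder induced on `C`. -/
def Conforms (z : Finset I → WithTop ℝ) (P : Preo I) : Prop :=
  Compatible z P ∧
  ∀ C : Finset I, P.ConvexF C →
    ∀ C₁ C₂ : Finset I, Disjoint C₁ C₂ → C₁ ∪ C₂ = C →
      (∀ U ⊆ C, zConv z P C U = zConv z P C (U ∩ C₁) + zConv z P C (U ∩ C₂)) →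
      ∀ x ∈ C₁, ∀ y ∈ C₂, ¬ P.le x y ∧ ¬ P.le y x

/-- The preorder `pre(z)` associated to `z`: `x ≤ y` iff every `A` with `z(A) < ∞`
("open set") containing `y` contains `x`. -/
def preZ (z : Finset I → WithTop ℝ) : Preo I where
  le x y := ∀ A : Finset I, z A ≠ ⊤ → y ∈ A → x ∈ A
  le_refl _ := fun _ _ h => h
  le_trans h h' := fun A hA hy => h A hA (h' A hA hy)

/-- The preorder associated (by the Alexandroff correspondence) to a family of subsets. -/
def preOfFam (F : Set (Finset I)) : Preo I where
  le x y := ∀ A ∈ F, y ∈ A → x ∈ A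
  le_refl _ := fun _ _ h => h
  le_trans h h' := fun A hA hy => h A hA (h' A hA hy)

/-- `Alin(P, z)`: the affine space cut out by `x_A = z(A)` for `A` a down-set of `P`. -/
def Alin (z : Finset I → WithTop ℝ) (P : Preo I) : Set (I → ℝ) :=
  {x | ∀ A : Finset I, P.IsDownset A → ((∑ i ∈ A, x i : ℝ) : WithTop ℝ) = z A}

/-- `AlinBu(P, z)`: the affine space cut out by `x_C = z_C(C)` for `C` a bubble of `P`. -/
def AlinBu (z : Finset I → WithTop ℝ) (P : Preo I) : Set (I → ℝ) :=
  {x | ∀ a : I, ((∑ i ∈ P.bubble a, x i : ℝ) : WithTop ℝ) = zConv z P (P.bubble a) (P.bubble a)}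

/-- `Φ_z(P)`: the (possibly empty) face of `Π(z)` cut out by the equalities `x_A = z(A)`
for `A` a down-set of `P`. -/
def Phi (z : Finset I → WithTop ℝ) (P : Preo I) : Set (I → ℝ) :=
  {x | x ∈ EGP z ∧ ∀ A : Finset I, P.IsDownset A → ((∑ i ∈ A, x i : ℝ) : WithTop ℝ) = z A}

/-- `Ψ_z(G)`: the family of sets `A` with `z(A) < ∞` on which `x_A = z(A)` for all `x ∈ G`. -/
def PsiFam (z : Finset I → WithTop ℝ) (G : Set (I → ℝ)) : Set (Finset I) :=
  {A | z A ≠ ⊤ ∧ ∀ x ∈ G, ((∑ i ∈ A, x i : ℝ) : WithTop ℝ) = z A}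

/-- `Ψ_z(G)` as a preorder. -/
def PsiPre (z : Finset I → WithTop ℝ) (G : Set (I → ℝ)) : Preo I :=
  preOfFam (PsiFam z G)

/-- `z_P = ∏_{C ∈ b(P)} z_C`: the product over all bubbles of `P`. -/
noncomputable def zP (z : Finset I → WithTop ℝ) (P : Preo I) : Finset I → WithTop ℝ :=
  fun E => ∑ C ∈ P.bubbles, zConv z P C (E ∩ C)

/-- The restriction `z|_S` of `z` to subsets of `S`. -/
def restrictFn (z : Finset I → WithTop ℝ) (S : Finset I) :
    Finset {x : I // x ∈ S} → WithTop ℝ :=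
  fun U => z (U.map (Function.Embedding.subtype fun x => x ∈ S))

/-- The corestriction `z_{/S}` of `z`, on subsets of `I ∖ S`. -/
noncomputable def coresFn (z : Finset I → WithTop ℝ) (S : Finset I) :
    Finset {x : I // x ∉ S} → WithTop ℝ :=
  fun U => z (S ∪ U.map (Function.Embedding.subtype fun x => x ∉ S)) +
    ((-(z S).untopD 0 : ℝ) : WithTop ℝ)

/-- The restriction `P|_S` of a preorder to `S`. -/
def restrictPre (P : Preo I) (S : Finset I) : Preo {x : I // x ∈ S} where
  le a b := P.le a b
  le_refl a := P.le_refl a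
  le_trans h h' := P.le_trans h h'

/-- The corestriction `P_{/S}` of a preorder, on `I ∖ S`. -/
def coresPre (P : Preo I) (S : Finset I) : Preo {x : I // x ∉ S} where
  le a b := P.le a b
  le_refl a := P.le_refl a
  le_trans h h' := P.le_trans h h'

end Submod

/-! The sets along which `z` factors are closed under complement and intersection, so they form a
Boolean algebra of subsets of `I`; its atoms are the blocks of the factorization. Conversely every
block of an indecomposable factorization is such a split, and indecomposability makes it an atom. -/

section Splits

variable {I : Type*} [DecidableEq I] {z : Finset I → WithTop ℝ} {S T B : Finset I}

def IsSplit (z : Finset I → WithTop ℝ) (S : Finset I) : Prop :=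
  ∀ E : Finset I, z E = z (E ∩ S) + z (E \ S)

def IsSplitAtom (z : Finset I → WithTop ℝ) (B : Finset I) : Prop :=
  Minimal (fun S => IsSplit z S ∧ S.Nonempty) B

noncomputable def splitAtoms [Fintype I] (z : Finset I → WithTop ℝ) : Finset (Finset I) :=
  Finset.univ.filter (IsSplitAtom z)

lemma isSplit_univ [Fintype I] (hz0 : z ∅ = 0) : IsSplit z Finset.univ := by
  intro E
  rw [Finset.inter_univ, Finset.sdiff_eq_empty_iff_subset.mpr E.subset_univ, hz0, add_zero]

lemma IsSplit.compl [Fintype I] (hS : IsSplit z S) : IsSplit z Sᶜ := by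
  intro E
  rw [sdiff_compl, ← Finset.sdiff_eq_inter_compl, add_comm]
  exact hS E

lemma IsSplit.inter (hS : IsSplit z S) (hT : IsSplit z T) : IsSplit z (S ∩ T) := by
  intro E
  have h₁ : (E \ (S ∩ T)) ∩ S = (E ∩ S) \ T := by ext; simp; tauto
  have h₂ : (E \ (S ∩ T)) \ S = E \ S := by ext; simp; tauto
  calc z E = z (E ∩ S) + z (E \ S) := hS E
    _ = z (E ∩ (S ∩ T)) + (z ((E ∩ S) \ T) + z (E \ S)) := by
      rw [hT (E ∩ S), Finset.inter_assoc, add_assoc]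
    _ = z (E ∩ (S ∩ T)) + z (E \ (S ∩ T)) := by rw [hS (E \ (S ∩ T)), h₁, h₂]

lemma IsSplit.splitsAlong (hS : IsSplit z S) (hSB : S ⊆ B) : SplitsAlong z B S (B \ S) := by
  refine ⟨Finset.disjoint_sdiff, Finset.union_sdiff_of_subset hSB, fun E hE => ?_⟩
  rw [hS E, ← Finset.inter_sdiff_assoc, Finset.inter_eq_left.mpr hE]

lemma SplitsAlong.isSplit_left (hB : IsSplit z B) (h : SplitsAlong z B S T) : IsSplit z S := by
  obtain ⟨hST, rfl, hsplit⟩ := h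
  intro E
  have h₁ : E ∩ (S ∪ T) ∩ S = E ∩ S := by ext; simp
  have h₂ : E ∩ (S ∪ T) ∩ T = (E \ S) ∩ (S ∪ T) := by
    ext x; have := hST.notMem_of_mem_left_finset (a := x); simp; tauto
  have h₃ : E \ (S ∪ T) = (E \ S) \ (S ∪ T) := by ext; simp; tauto
  rw [hB E, hsplit _ Finset.inter_subset_right, h₁, h₂, h₃, add_assoc, ← hB]

lemma IsSplitAtom.isSplit (h : IsSplitAtom z B) : IsSplit z B := h.prop.1

lemma IsSplitAtom.nonempty (h : IsSplitAtom z B) : B.Nonempty := h.prop.2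

lemma IsSplitAtom.eq_of_isSplit (h : IsSplitAtom z B) (hS : IsSplit z S) (hSB : S ⊆ B)
    (hne : S.Nonempty) : S = B :=
  h.eq_of_le ⟨hS, hne⟩ hSB

lemma IsSplitAtom.eq_of_not_disjoint (hB : IsSplitAtom z B) (hB' : IsSplitAtom z S)
    (hnd : ¬ Disjoint B S) : B = S := by
  have hne : (B ∩ S).Nonempty := Finset.not_disjoint_iff_nonempty_inter.mp hnd
  have hsplit := hB.isSplit.inter hB'.isSplit
  rw [← hB.eq_of_isSplit hsplit Finset.inter_subset_left hne,
    hB'.eq_of_isSplit hsplit Finset.inter_subset_right hne]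

lemma IsSplitAtom.indecompOn (h : IsSplitAtom z B) : IndecompOn z B := by
  intro S T hS hT hsplit
  have hSB : S = B :=
    h.eq_of_isSplit (hsplit.isSplit_left h.isSplit) (hsplit.2.1 ▸ Finset.subset_union_left) hS
  obtain ⟨hST, hunion, -⟩ := hsplit
  obtain ⟨t, ht⟩ := hT
  have htS : t ∈ S := hSB ▸ hunion ▸ Finset.mem_union_right S ht
  exact hST.notMem_of_mem_right_finset ht htS

lemma exists_isSplitAtom_mem [Fintype I] (hz0 : z ∅ = 0) (x : I) :
    ∃ B, IsSplitAtom z B ∧ x ∈ B := by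
  obtain ⟨B, -, hmin⟩ := exists_minimal_le_of_wellFoundedLT (fun S => IsSplit z S ∧ x ∈ S) _
    ⟨isSplit_univ hz0, Finset.mem_univ x⟩
  obtain ⟨hB, hxB⟩ := hmin.prop
  refine ⟨B, ⟨⟨hB, x, hxB⟩, fun S ⟨hS, s, hs⟩ hSB => ?_⟩, hxB⟩
  by_cases hx : x ∈ S
  · exact hmin.le_of_le ⟨hS, hx⟩ hSB
  -- otherwise `B ∩ Sᶜ` would be a smaller split containing `x`
  have hBS : B ≤ B ∩ Sᶜ :=
    hmin.le_of_le ⟨hB.inter hS.compl, by simp [hxB, hx]⟩ Finset.inter_subset_left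
  exact absurd hs (Finset.mem_compl.mp (Finset.mem_inter.mp (hBS (hSB hs))).2)

lemma sum_inter_eq_of_isSplit (hz0 : z ∅ = 0) {F : Finset (Finset I)}
    (hF : ∀ B ∈ F, IsSplit z B) (hdisj : (F : Set (Finset I)).PairwiseDisjoint id)
    (E : Finset I) : z (E ∩ F.sup id) = ∑ B ∈ F, z (E ∩ B) := by
  induction F using Finset.induction_on with
  | empty => simp [hz0]
  | insert B F hB ih =>
    have hBF : Disjoint B (F.sup id) := Finset.disjoint_sup_right.mpr fun B' hB' =>
      hdisj (by simp) (by simp [hB']) (ne_of_mem_of_not_mem hB' hB).symm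
    have h₁ : E ∩ (insert B F).sup id ∩ B = E ∩ B := by ext; simp
    have h₂ : (E ∩ (insert B F).sup id) \ B = E ∩ F.sup id := by
      ext x; have := hBF.notMem_of_mem_left_finset (a := x); simp only [Finset.sup_insert,
        id_eq, Finset.sup_eq_union, Finset.mem_sdiff, Finset.mem_inter, Finset.mem_union]; tauto
    rw [Finset.sum_insert hB, hF B (by simp) (E ∩ _), h₁, h₂,
      ih (fun B' hB' => hF B' (by simp [hB'])) (hdisj.subset (by simp))]

lemma isSplit_of_mem_of_eq_sum (hz0 : z ∅ = 0) {fam : Finset (Finset I)}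
    (hdisj : (fam : Set (Finset I)).PairwiseDisjoint id)
    (hfac : ∀ E, z E = ∑ B ∈ fam, z (E ∩ B)) (hB : B ∈ fam) : IsSplit z B := by
  intro E
  have hrest : ∀ B' ∈ fam.erase B, (E \ B) ∩ B' = E ∩ B' := fun B' hB' => by
    obtain ⟨hne, hB'⟩ := Finset.mem_erase.mp hB'
    ext x; have := (hdisj hB hB' hne.symm).notMem_of_mem_left_finset (a := x); simp; tauto
  rw [hfac E, hfac (E \ B), ← Finset.add_sum_erase _ _ hB, ← Finset.add_sum_erase _ _ hB,
    Finset.sdiff_inter_self, hz0, zero_add,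
    Finset.sum_congr rfl fun B' hB' => congrArg z (hrest B' hB')]

section Factorization

variable [Fintype I] {fam : Finset (Finset I)}

lemma IsIndecompFactorization.isSplitAtom (hz0 : z ∅ = 0) (h : IsIndecompFactorization z fam)
    (hB : B ∈ fam) : IsSplitAtom z B := by
  obtain ⟨hne, hdisj, -, hfac, hind⟩ := h
  have hsplit := isSplit_of_mem_of_eq_sum hz0 (fun B hB B' hB' => hdisj B hB B' hB') hfac hB
  refine ⟨⟨hsplit, hne B hB⟩, fun S ⟨hS, hSne⟩ hSB => ?_⟩
  by_contra hBS
  exact hind B hB S (B \ S) hSne (Finset.sdiff_nonempty.mpr hBS) (hS.splitsAlong hSB)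

lemma IsIndecompFactorization.eq_splitAtoms (hz0 : z ∅ = 0)
    (h : IsIndecompFactorization z fam) : fam = splitAtoms z := by
  ext B
  simp only [splitAtoms, Finset.mem_filter, Finset.mem_univ, true_and]
  refine ⟨h.isSplitAtom hz0, fun hB => ?_⟩
  obtain ⟨x, hx⟩ := hB.nonempty
  obtain ⟨B', hB', hxB'⟩ := Finset.mem_sup.mp (h.2.2.1 ▸ Finset.mem_univ x)
  have hBB' : ¬ Disjoint B B' := Finset.not_disjoint_iff.mpr ⟨x, hx, hxB'⟩
  rwa [hB.eq_of_not_disjoint (h.isSplitAtom hz0 hB') hBB']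

lemma isIndecompFactorization_splitAtoms (hz0 : z ∅ = 0) :
    IsIndecompFactorization z (splitAtoms z) := by
  have hatom : ∀ B ∈ splitAtoms z, IsSplitAtom z B := fun B hB => (Finset.mem_filter.mp hB).2
  have hdisj : (splitAtoms z : Set (Finset I)).PairwiseDisjoint id := fun B hB B' hB' hne =>
    by_contra fun hnd => hne ((hatom B hB).eq_of_not_disjoint (hatom B' hB') hnd)
  have hcover : (splitAtoms z).sup id = Finset.univ := Finset.eq_univ_of_forall fun x => by
    obtain ⟨B, hB, hx⟩ := exists_isSplitAtom_mem hz0 x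
    exact Finset.mem_sup.mpr ⟨B, Finset.mem_filter.mpr ⟨Finset.mem_univ B, hB⟩, hx⟩
  refine ⟨fun B hB => (hatom B hB).nonempty, fun B hB B' hB' => hdisj hB hB', hcover,
    fun E => ?_, fun B hB => (hatom B hB).indecompOn⟩
  rw [← sum_inter_eq_of_isSplit hz0 (fun B hB => (hatom B hB).isSplit) hdisj, hcover,
    Finset.inter_univ]

end Factorization

end Splits

theorem unique_indecomposable_factorization_general
    {I : Type*} [Fintype I] [DecidableEq I]
    (z : Finset I → WithTop ℝ) (hz0 : z ∅ = 0) :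
    ∃! fam : Finset (Finset I), IsIndecompFactorization z fam :=
  ⟨splitAtoms z, isIndecompFactorization_splitAtoms hz0, fun _ h => h.eq_splitAtoms hz0⟩

/-- Every extended Boolean function `z` on a finite set `I` admits a unique
factorization into indecomposable extended Boolean functions; i.e. there is a unique
partition of `I` underlying such a factorization (the factors being the restrictions of
`z` to the parts). -/
theorem unique_indecomposable_factorization
    {I : Type*} [Fintype I] [DecidableEq I]
    (z : Finset I → WithTop ℝ) (hz0 : z ∅ = 0) (hzI : z Finset.univ ≠ ⊤) :
    ∃! fam : Finset (Finset I), IsIndecompFactorization z fam :=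
  unique_indecomposable_factorization_general z hz0
end

section
/- Let z be a submodular function on a finite set I, let S ⊆ T ⊆ I with z(S) < ∞ and z(T) < ∞, let C = T ∖ S, and let C = C₁ ∪ C₂ be a disjoint union. Then the function z' = z_{T/S} decomposes as the product z'|_{C₁} · z'|_{C₂} if and only if z(T) + z(S) = z(S ∪ C₁) + z(S ∪ C₂). -/
/-!
For submodular `z` the modular defect `z A + z B - z (A ∪ B) - z (A ∩ B) ≥ 0` can only grow
when `A` and `B` are enlarged with their intersection kept fixed: submodularity for the pairs
`(A', A ∪ B)` and `(A' ∪ B, B')` chains the two defects. So if `(S ∪ C₁, S ∪ C₂)` is a modular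
pair, so is every `(S ∪ E₁, S ∪ E₂)` with `Eᵢ ⊆ Cᵢ`, and this is the product decomposition of
`z_{T/S}` at `E₁ ∪ E₂`. Conversely, the decomposition at `E = T ∖ S` is the modular equation.
-/

open scoped Classical

namespace Submodular

variable {I : Type*} [DecidableEq I] {z : Finset I → WithTop ℝ}

-- The modular-defect inequality, stated without subtraction since `z` may take the value `⊤`.
theorem add_add_le_of_subset (hz : Submodular z) {A B A' B' : Finset I}
    (hA : A ⊆ A') (hB : B ⊆ B') (hAB : A ∩ B = A' ∩ B') :
    z A + z B + z (A' ∪ B') ≤ z (A ∪ B) + z A' + z B' := by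
  have h₁ : z (A' ∪ B) + z A ≤ z A' + z (A ∪ B) := by
    have hu : A' ∪ (A ∪ B) = A' ∪ B := by grind
    have hi : A' ∩ (A ∪ B) = A := by
      rw [Finset.inter_union_distrib_left, Finset.inter_eq_right.mpr hA, Finset.union_eq_left]
      exact (Finset.inter_subset_inter_left hB).trans (hAB.ge.trans Finset.inter_subset_left)
    simpa only [hu, hi] using hz A' (A ∪ B)
  have h₂ : z (A' ∪ B') + z B ≤ z (A' ∪ B) + z B' := by
    have hu : A' ∪ B ∪ B' = A' ∪ B' := by grind
    have hi : (A' ∪ B) ∩ B' = B := by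
      rw [Finset.union_inter_distrib_right, Finset.inter_eq_left.mpr hB, Finset.union_eq_right]
      exact hAB.ge.trans Finset.inter_subset_right
    simpa only [hu, hi] using hz (A' ∪ B) B'
  by_cases hW : z (A' ∪ B) = ⊤
  · rw [hW, top_add, top_le_iff, WithTop.add_eq_top] at h₁
    rcases h₁ with h | h <;> simp [h]
  rw [← WithTop.add_le_add_iff_left hW]
  calc z (A' ∪ B) + (z A + z B + z (A' ∪ B'))
      = (z (A' ∪ B) + z A) + (z (A' ∪ B') + z B) := by ac_rfl
    _ ≤ (z A' + z (A ∪ B)) + (z (A' ∪ B) + z B') := add_le_add h₁ h₂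
    _ = z (A' ∪ B) + (z (A ∪ B) + z A' + z B') := by ac_rfl

theorem add_eq_add_of_subset (hz : Submodular z) {A B A' B' : Finset I}
    (hA : A ⊆ A') (hB : B ⊆ B') (hAB : A ∩ B = A' ∩ B') (hfin : z (A' ∪ B') ≠ ⊤)
    (hmod : z (A' ∪ B') + z (A' ∩ B') = z A' + z B') :
    z (A ∪ B) + z (A ∩ B) = z A + z B := by
  refine le_antisymm (hz A B) ?_
  rw [← WithTop.add_le_add_iff_right hfin]
  calc z A + z B + z (A' ∪ B') ≤ z (A ∪ B) + z A' + z B' := hz.add_add_le_of_subset hA hB hAB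
    _ = z (A ∪ B) + z (A ∩ B) + z (A' ∪ B') := by rw [add_assoc, ← hmod, hAB]; ac_rfl

end Submodular

section coRes

variable {I : Type*} [DecidableEq I] {z : Finset I → WithTop ℝ} {S : Finset I}

theorem coRes_add_self (hS : z S ≠ ⊤) (U : Finset I) : coRes z S U + z S = z (S ∪ U) := by
  obtain ⟨s, hs⟩ := WithTop.ne_top_iff_exists.mp hS
  rw [coRes, ← hs, WithTop.untopD_coe, add_assoc, ← WithTop.coe_add, neg_add_cancel,
    WithTop.coe_zero, add_zero]

theorem coRes_eq_add_iff (hS : z S ≠ ⊤) {U V W : Finset I} :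
    coRes z S U = coRes z S V + coRes z S W ↔ z (S ∪ U) + z S = z (S ∪ V) + z (S ∪ W) := by
  rw [← WithTop.add_right_inj (WithTop.add_ne_top.mpr ⟨hS, hS⟩), ← add_assoc,
    add_add_add_comm, coRes_add_self hS, coRes_add_self hS, coRes_add_self hS]

end coRes

theorem corestriction_decomposes_iff_general
    {I : Type*} [DecidableEq I]
    (z : Finset I → WithTop ℝ)
    (hsub : Submodular z) (S T : Finset I) (hST : S ⊆ T)
    (hS : z S ≠ ⊤) (hT : z T ≠ ⊤)
    (C₁ C₂ : Finset I) (hdisj : Disjoint C₁ C₂) (hC : C₁ ∪ C₂ = T \ S) :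
    (∀ E ⊆ T \ S, coRes z S E = coRes z S (E ∩ C₁) + coRes z S (E ∩ C₂)) ↔
      z T + z S = z (S ∪ C₁) + z (S ∪ C₂) := by
  have hunion (D₁ D₂ : Finset I) : S ∪ D₁ ∪ (S ∪ D₂) = S ∪ (D₁ ∪ D₂) :=
    (Finset.union_union_distrib_left S D₁ D₂).symm
  have hinter {D₁ D₂ : Finset I} (h₁ : D₁ ⊆ C₁) (h₂ : D₂ ⊆ C₂) : (S ∪ D₁) ∩ (S ∪ D₂) = S := by
    rw [← Finset.union_inter_distrib_left,
      Finset.disjoint_iff_inter_eq_empty.mp (hdisj.mono h₁ h₂), Finset.union_empty]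
  have hST' : S ∪ (T \ S) = T := Finset.union_sdiff_of_subset hST
  constructor
  · intro h
    have hsplit := h (T \ S) subset_rfl
    rwa [coRes_eq_add_iff hS, hST', ← hC, Finset.union_inter_cancel_left,
      Finset.union_inter_cancel_right] at hsplit
  · intro h E hE
    have hE₁ : E ∩ C₁ ⊆ C₁ := Finset.inter_subset_right
    have hE₂ : E ∩ C₂ ⊆ C₂ := Finset.inter_subset_right
    have hSE : S ∪ (E ∩ C₁ ∪ E ∩ C₂) = S ∪ E := by
      rw [← Finset.inter_union_distrib_left, hC, Finset.inter_eq_left.mpr hE]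
    have hmod := hsub.add_eq_add_of_subset (Finset.union_subset_union_right hE₁)
      (Finset.union_subset_union_right hE₂)
      (by rw [hinter hE₁ hE₂, hinter subset_rfl subset_rfl]) (by rwa [hunion, hC, hST'])
      (by rwa [hunion, hC, hST', hinter subset_rfl subset_rfl])
    rwa [hunion, hSE, hinter hE₁ hE₂, ← coRes_eq_add_iff hS] at hmod

/-- For a submodular `z`, `S ⊆ T` with `z S, z T < ∞`, and a disjoint
decomposition `T ∖ S = C₁ ∪ C₂`, the function `z' = z_{T/S}` decomposes as the product
`z'|_{C₁} · z'|_{C₂}` iff `z(T) + z(S) = z(S ∪ C₁) + z(S ∪ C₂)`. -/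
theorem corestriction_decomposes_iff
    {I : Type*} [Fintype I] [DecidableEq I]
    (z : Finset I → WithTop ℝ) (hz0 : z ∅ = 0) (hzI : z Finset.univ ≠ ⊤)
    (hsub : Submodular z) (S T : Finset I) (hST : S ⊆ T)
    (hS : z S ≠ ⊤) (hT : z T ≠ ⊤)
    (C₁ C₂ : Finset I) (hdisj : Disjoint C₁ C₂) (hC : C₁ ∪ C₂ = T \ S) :
    (∀ E ⊆ T \ S, coRes z S E = coRes z S (E ∩ C₁) + coRes z S (E ∩ C₂)) ↔
      z T + z S = z (S ∪ C₁) + z (S ∪ C₂) :=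
  corestriction_decomposes_iff_general z hsub S T hST hS hT C₁ C₂ hdisj hC
end

section
/- If a submodular function z on I = S ⊔ T decomposes as a product z = u·v, where u is submodular on S and v is submodular on T, then under the identification ℝ^I ≅ ℝ^S × ℝ^T the extended generalized permutahedron Π(z) equals the product Π(u) × Π(v). -/
open scoped Classical

/-!
Testing the inequalities of `Π(z)` on `S ⊔ ∅` and `∅ ⊔ T` gives `x_S ≤ u(S)` and `x_T ≤ v(T)`;
since `x_S + x_T = z(I) = u(S) + v(T)`, both are equalities. Testing on `B ⊔ T` and cancelling
`x_T = v(T)` then gives `x_B ≤ u(B)`, and symmetrically for `T`.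
-/

namespace WithTop

variable {α : Type*} [AddCommGroup α] [LinearOrder α] [IsOrderedAddMonoid α]

lemma coe_eq_and_coe_eq_of_coe_add_coe_eq_add {p q : α} {a b : WithTop α}
    (hpa : (p : WithTop α) ≤ a) (hqb : (q : WithTop α) ≤ b) (h : (p : WithTop α) + q = a + b) :
    (p : WithTop α) = a ∧ (q : WithTop α) = b := by
  obtain ⟨ha, hb⟩ := WithTop.add_ne_top.mp (h ▸ WithTop.add_ne_top.mpr ⟨coe_ne_top, coe_ne_top⟩)
  lift a to α using ha
  lift b to α using hb
  norm_cast at *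
  exact (add_eq_add_iff_eq_and_eq hpa hqb).mp h

end WithTop

section Product

open Finset

variable {S T : Type*} [Fintype S] [Fintype T]
  {u : Finset S → WithTop ℝ} {v : Finset T → WithTop ℝ} {z : Finset (S ⊕ T) → WithTop ℝ}
  {x : S ⊕ T → ℝ}

lemma mem_EGP_of_mem_EGP_inl_of_mem_EGP_inr (hzuv : ∀ E, z E = u E.toLeft + v E.toRight)
    (hu : (fun s => x (Sum.inl s)) ∈ EGP u) (hv : (fun t => x (Sum.inr t)) ∈ EGP v) :
    x ∈ EGP z := by
  refine ⟨?_, fun A => ?_⟩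
  · rw [Fintype.sum_sum_type, hzuv, toLeft_univ, toRight_univ, WithTop.coe_add, hu.1, hv.1]
  · rw [sum_sum_eq_sum_toLeft_add_sum_toRight, hzuv, WithTop.coe_add]
    exact add_le_add (hu.2 _) (hv.2 _)

lemma sum_inl_eq_and_sum_inr_eq_of_mem_EGP (hu0 : u ∅ = 0) (hv0 : v ∅ = 0)
    (hzuv : ∀ E, z E = u E.toLeft + v E.toRight) (hx : x ∈ EGP z) :
    ((∑ s, x (Sum.inl s) : ℝ) : WithTop ℝ) = u univ ∧
      ((∑ t, x (Sum.inr t) : ℝ) : WithTop ℝ) = v univ := by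
  have hS := hx.2 (univ.disjSum ∅)
  have hT := hx.2 ((∅ : Finset S).disjSum univ)
  simp only [sum_disjSum, hzuv, toLeft_disjSum, toRight_disjSum, hu0, hv0, sum_empty, add_zero,
    zero_add] at hS hT
  refine WithTop.coe_eq_and_coe_eq_of_coe_add_coe_eq_add hS hT ?_
  rw [← WithTop.coe_add, ← Fintype.sum_sum_type, hx.1, hzuv, toLeft_univ, toRight_univ]

lemma inl_mem_EGP_of_mem_EGP (hu0 : u ∅ = 0) (hv0 : v ∅ = 0)
    (hzuv : ∀ E, z E = u E.toLeft + v E.toRight) (hx : x ∈ EGP z) :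
    (fun s => x (Sum.inl s)) ∈ EGP u := by
  obtain ⟨hS, hT⟩ := sum_inl_eq_and_sum_inr_eq_of_mem_EGP hu0 hv0 hzuv hx
  refine ⟨hS, fun B => ?_⟩
  have hB := hx.2 (B.disjSum univ)
  rwa [sum_disjSum, hzuv, toLeft_disjSum, toRight_disjSum, WithTop.coe_add, ← hT,
    WithTop.add_le_add_iff_right WithTop.coe_ne_top] at hB

lemma inr_mem_EGP_of_mem_EGP (hu0 : u ∅ = 0) (hv0 : v ∅ = 0)
    (hzuv : ∀ E, z E = u E.toLeft + v E.toRight) (hx : x ∈ EGP z) :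
    (fun t => x (Sum.inr t)) ∈ EGP v := by
  obtain ⟨hS, hT⟩ := sum_inl_eq_and_sum_inr_eq_of_mem_EGP hu0 hv0 hzuv hx
  refine ⟨hT, fun B => ?_⟩
  have hB := hx.2 (univ.disjSum B)
  rwa [sum_disjSum, hzuv, toLeft_disjSum, toRight_disjSum, WithTop.coe_add, ← hS,
    WithTop.add_le_add_iff_left WithTop.coe_ne_top] at hB

end Product

theorem EGP_product_general
    {S T : Type*} [Fintype S] [Fintype T]
    (u : Finset S → WithTop ℝ) (hu0 : u ∅ = 0)
    (v : Finset T → WithTop ℝ) (hv0 : v ∅ = 0)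
    (z : Finset (S ⊕ T) → WithTop ℝ)
    (hzuv : ∀ E : Finset (S ⊕ T), z E = u E.toLeft + v E.toRight) :
    EGP z = {x : S ⊕ T → ℝ |
      (fun s : S => x (Sum.inl s)) ∈ EGP u ∧ (fun t : T => x (Sum.inr t)) ∈ EGP v} := by
  ext x
  exact ⟨fun hx => ⟨inl_mem_EGP_of_mem_EGP hu0 hv0 hzuv hx,
      inr_mem_EGP_of_mem_EGP hu0 hv0 hzuv hx⟩,
    fun ⟨hu, hv⟩ => mem_EGP_of_mem_EGP_inl_of_mem_EGP_inr hzuv hu hv⟩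

/-- If a submodular function `z` on `I = S ⊔ T` decomposes as a product
`z = u · v` of submodular functions on `S` and `T`, then under `ℝ^I ≅ ℝ^S × ℝ^T` the
extended generalized permutahedron `Π(z)` is the product `Π(u) × Π(v)`. -/
theorem EGP_product
    {S T : Type*} [Fintype S] [Fintype T] [DecidableEq S] [DecidableEq T]
    (u : Finset S → WithTop ℝ) (hu0 : u ∅ = 0) (huI : u Finset.univ ≠ ⊤) (hu : Submodular u)
    (v : Finset T → WithTop ℝ) (hv0 : v ∅ = 0) (hvI : v Finset.univ ≠ ⊤) (hv : Submodular v)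
    (z : Finset (S ⊕ T) → WithTop ℝ) (hz : Submodular z)
    (hzuv : ∀ E : Finset (S ⊕ T), z E = u E.toLeft + v E.toRight) :
    EGP z = {x : S ⊕ T → ℝ |
      (fun s : S => x (Sum.inl s)) ∈ EGP u ∧ (fun t : T => x (Sum.inr t)) ∈ EGP v} :=
  EGP_product_general u hu0 v hv0 z hzuv
end

section
/- Let z be a submodular function on a finite set I and let L be a linear extension of the preorder pre(z). Then the affine linear space Alin(L, z) is contained in Π(z). In particular: (i) Alin(L, z) is nonempty and hence Π(z) is nonempty; (ii) for each S ⊆ I with z(S) < ∞, equality x_S = z(S) is attained for some x ∈ Π(z). -/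
open scoped Classical

/-!
The sets `S` with `z S < ⊤` are closed under `∪` and `∩` by submodularity, and every down-set
of `pre(z)`, hence of `L`, is such a set: it is a union of principal down-sets, each an
intersection of sets of finite value. For `x ∈ Alin(L, z)` and `z S < ⊤`, let `i` be an
`L`-maximal element of `S`; its bubble `B` lies in `S`, and submodularity applied to `S` and the
strict down-set `L_{<i}` gives `z(L_{≤i}) + z(S \ B) ≤ z(S) + z(L_{<i})`. Since `x` takes the
values `z(L_{≤i})` and `z(L_{<i})` on these down-sets, `x_S ≤ z(S)` follows from
`x_{S \ B} ≤ z(S \ B)` by induction.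

A point of `Alin(L, z)` is obtained by spreading each increment `z(L_{≤i}) - z(L_{<i})` evenly
over the bubble of `i`. For the last claim, reorder `L` so that `S` lies below its complement:
this is again a linear extension of `pre(z)`, with `S` among its down-sets.
-/

namespace Preo

variable {X : Type*}

section Intervals

variable [Fintype X] (P : Preo X)

noncomputable def Iic (i : X) : Finset X := Finset.univ.filter (P.le · i)

noncomputable def Iio (i : X) : Finset X := Finset.univ.filter fun j => P.le j i ∧ ¬ P.le i j

variable {P}

@[simp] lemma mem_Iic {i j : X} : j ∈ P.Iic i ↔ P.le j i := by simp [Iic]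

@[simp] lemma mem_Iio {i j : X} : j ∈ P.Iio i ↔ P.le j i ∧ ¬ P.le i j := by simp [Iio]

@[simp] lemma mem_bubble {i j : X} : j ∈ P.bubble i ↔ P.le i j ∧ P.le j i := by
  simp [bubble]

lemma mem_bubble_self (i : X) : i ∈ P.bubble i := mem_bubble.2 ⟨P.le_refl i, P.le_refl i⟩

lemma isDownset_Iic (i : X) : P.IsDownset (P.Iic i) := fun _ _ hy hxy =>
  mem_Iic.2 (P.le_trans hxy (mem_Iic.1 hy))

lemma isDownset_Iio (i : X) : P.IsDownset (P.Iio i) := fun _ _ hy hxy =>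
  mem_Iio.2 ⟨P.le_trans hxy (mem_Iio.1 hy).1, fun h => (mem_Iio.1 hy).2 (P.le_trans h hxy)⟩

lemma Iio_subset_Iic (i : X) : P.Iio i ⊆ P.Iic i := fun _ hj => mem_Iic.2 (mem_Iio.1 hj).1

lemma Iic_sdiff_Iio [DecidableEq X] (i : X) : P.Iic i \ P.Iio i = P.bubble i := by
  ext j
  simp only [Finset.mem_sdiff, mem_Iic, mem_Iio, mem_bubble]
  tauto

lemma Iic_eq_of_mem_bubble {i j : X} (hj : j ∈ P.bubble i) : P.Iic j = P.Iic i := by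
  obtain ⟨hij, hji⟩ := mem_bubble.1 hj
  ext k
  simp only [mem_Iic]
  exact ⟨fun h => P.le_trans h hji, fun h => P.le_trans h hij⟩

lemma Iio_eq_of_mem_bubble {i j : X} (hj : j ∈ P.bubble i) : P.Iio j = P.Iio i := by
  obtain ⟨hij, hji⟩ := mem_bubble.1 hj
  ext k
  simp only [mem_Iio]
  exact ⟨fun h => ⟨P.le_trans h.1 hji, fun h' => h.2 (P.le_trans hji h')⟩,
    fun h => ⟨P.le_trans h.1 hij, fun h' => h.2 (P.le_trans hij h')⟩⟩

lemma bubble_eq_of_mem_bubble [DecidableEq X] {i j : X} (hj : j ∈ P.bubble i) :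
    P.bubble j = P.bubble i := by
  rw [← Iic_sdiff_Iio, ← Iic_sdiff_Iio, Iic_eq_of_mem_bubble hj, Iio_eq_of_mem_bubble hj]

lemma IsDownset.eq_Iic {A : Finset X} (hA : P.IsDownset A) {i : X} (hi : i ∈ A)
    (hmax : ∀ j ∈ A, P.le j i) : A = P.Iic i := by
  ext j
  exact ⟨fun hj => mem_Iic.2 (hmax j hj), fun hj => hA hi (mem_Iic.1 hj)⟩

lemma union_Iio_eq_Iic [DecidableEq X] {S : Finset X} {i : X} (hmax : ∀ j ∈ S, P.le j i)
    (hbub : P.bubble i ⊆ S) : S ∪ P.Iio i = P.Iic i := by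
  ext j
  have hj := hmax j
  have hbj := @hbub j
  simp only [Finset.mem_union, mem_Iio, mem_Iic, mem_bubble] at hbj ⊢
  tauto

lemma sdiff_Iio_eq_bubble [DecidableEq X] {S : Finset X} {i : X} (hmax : ∀ j ∈ S, P.le j i)
    (hbub : P.bubble i ⊆ S) : S \ P.Iio i = P.bubble i := by
  ext j
  have hj := hmax j
  have hbj := @hbub j
  simp only [Finset.mem_sdiff, mem_Iio, mem_bubble] at hbj ⊢
  tauto

lemma IsLinExt.bubble_subset {P L : Preo X} (hL : P.IsLinExt L) {S : Finset X}
    (hS : P.IsDownset S) {i : X} (hi : i ∈ S) : L.bubble i ⊆ S := fun _ hj =>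
  hS hi ((hL.2.2 _ _).2 (mem_bubble.1 hj)).2

end Intervals

lemma Total.exists_max {P : Preo X} (hP : P.Total) {A : Finset X}
    (hA : A.Nonempty) : ∃ i ∈ A, ∀ j ∈ A, P.le j i := by
  let _ : LE X := ⟨P.le⟩
  have : IsTrans X (· ≤ ·) := ⟨fun _ _ _ => P.le_trans⟩
  obtain ⟨i, hiA, hi⟩ := A.exists_maximal hA
  exact ⟨i, hiA, fun j hj => (hP j i).elim id (hi hj)⟩

section Increments

variable [Fintype X] [DecidableEq X] (P : Preo X)

noncomputable def bubbleIncrement (f : Finset X → ℝ) (i : X) : ℝ :=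
  (f (P.Iic i) - f (P.Iio i)) / (P.bubble i).card

variable {P}

lemma sum_bubbleIncrement_bubble (f : Finset X → ℝ) (i : X) :
    ∑ j ∈ P.bubble i, P.bubbleIncrement f j = f (P.Iic i) - f (P.Iio i) := by
  have hcard : ((P.bubble i).card : ℝ) ≠ 0 := by
    exact_mod_cast (Finset.card_pos.2 ⟨i, mem_bubble_self i⟩).ne'
  rw [Finset.sum_congr rfl fun j hj => by
    rw [bubbleIncrement, Iic_eq_of_mem_bubble hj, Iio_eq_of_mem_bubble hj,
      bubble_eq_of_mem_bubble hj]]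
  rw [Finset.sum_const, nsmul_eq_mul]
  field_simp

lemma Total.sum_bubbleIncrement (hP : P.Total) {f : Finset X → ℝ} (hf : f ∅ = 0)
    {A : Finset X} (hA : P.IsDownset A) : ∑ i ∈ A, P.bubbleIncrement f i = f A := by
  induction A using Finset.strongInduction with
  | _ A ih =>
  rcases A.eq_empty_or_nonempty with rfl | hAne
  · simp [hf]
  obtain ⟨i, hiA, hmax⟩ := hP.exists_max hAne
  obtain rfl := hA.eq_Iic hiA hmax
  have hlt : P.Iio i ⊂ P.Iic i := Finset.ssubset_iff_of_subset (Iio_subset_Iic i) |>.2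
    ⟨i, mem_Iic.2 (P.le_refl i), fun h => (mem_Iio.1 h).2 (P.le_refl i)⟩
  rw [← Finset.sum_sdiff hlt.subset, Iic_sdiff_Iio, sum_bubbleIncrement_bubble,
    ih _ hlt (isDownset_Iio i)]
  ring

end Increments

def putBelow (L : Preo X) (S : Set X) : Preo X where
  le a b := (a ∈ S ∧ b ∉ S) ∨ ((a ∈ S ↔ b ∈ S) ∧ L.le a b)
  le_refl x := Or.inr ⟨Iff.rfl, L.le_refl x⟩
  le_trans := by
    rintro a b c (⟨ha, hb⟩ | ⟨hab, h1⟩) (⟨hb', hc⟩ | ⟨hbc, h2⟩)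
    · exact absurd hb' hb
    · exact Or.inl ⟨ha, fun hc' => hb (hbc.mpr hc')⟩
    · exact Or.inl ⟨hab.mpr hb', hc⟩
    · exact Or.inr ⟨hab.trans hbc, L.le_trans h1 h2⟩

lemma isDownset_putBelow (L : Preo X) (S : Finset X) : (L.putBelow S).IsDownset S := by
  rintro x y hy (⟨-, hy'⟩ | ⟨hxy, -⟩)
  · exact absurd hy hy'
  · exact hxy.mpr hy

lemma IsLinExt.putBelow {P L : Preo X} (hL : P.IsLinExt L) {S : Finset X}
    (hS : P.IsDownset S) : P.IsLinExt (L.putBelow S) := by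
  obtain ⟨hTotal, hLe, hBub⟩ := hL
  refine ⟨fun a b => ?_, fun a b hab => ?_, fun a b => ⟨fun hab => ?_, ?_⟩⟩
  · by_cases ha : a ∈ S <;> by_cases hb : b ∈ S
    · exact (hTotal a b).imp (fun h => Or.inr ⟨iff_of_true ha hb, h⟩)
        (fun h => Or.inr ⟨iff_of_true hb ha, h⟩)
    · exact Or.inl (Or.inl ⟨ha, hb⟩)
    · exact Or.inr (Or.inl ⟨hb, ha⟩)
    · exact (hTotal a b).imp (fun h => Or.inr ⟨iff_of_false ha hb, h⟩)
        (fun h => Or.inr ⟨iff_of_false hb ha, h⟩)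
  · by_cases hb : b ∈ S
    · exact Or.inr ⟨iff_of_true (hS hb hab) hb, hLe hab⟩
    · by_cases ha : a ∈ S
      · exact Or.inl ⟨ha, hb⟩
      · exact Or.inr ⟨iff_of_false ha hb, hLe hab⟩
  · have hiff : a ∈ S ↔ b ∈ S := ⟨fun ha => hS ha hab.2, fun hb => hS hb hab.1⟩
    obtain ⟨h1, h2⟩ := (hBub a b).1 hab
    exact ⟨Or.inr ⟨hiff, h1⟩, Or.inr ⟨hiff.symm, h2⟩⟩
  · rintro ⟨⟨ha, hb⟩ | ⟨hab, h1⟩, ⟨hb', ha'⟩ | ⟨hba, h2⟩⟩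
    · exact absurd hb' hb
    · exact absurd (hba.2 ha) hb
    · exact absurd (hab.2 hb') ha'
    · exact (hBub a b).2 ⟨h1, h2⟩

end Preo

section Submodular

variable {I : Type*} {z : Finset I → WithTop ℝ}

lemma isDownset_preZ_of_ne_top {A : Finset I} (hA : z A ≠ ⊤) : (preZ z).IsDownset A :=
  fun _ _ hy hxy => hxy A hA hy

variable [DecidableEq I]

lemma Submodular.supClosed (hsub : Submodular z) : SupClosed {A | z A ≠ ⊤} := fun S hS T hT =>
  (WithTop.add_ne_top.1 (ne_top_of_le_ne_top (WithTop.add_ne_top.2 ⟨hS, hT⟩) (hsub S T))).1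

lemma Submodular.infClosed (hsub : Submodular z) : InfClosed {A | z A ≠ ⊤} := fun S hS T hT =>
  (WithTop.add_ne_top.1 (ne_top_of_le_ne_top (WithTop.add_ne_top.2 ⟨hS, hT⟩) (hsub S T))).2

lemma ne_top_of_isDownset_preZ [Fintype I] (hz0 : z ∅ = 0) (hzI : z Finset.univ ≠ ⊤)
    (hsub : Submodular z) {A : Finset I} (hA : (preZ z).IsDownset A) : z A ≠ ⊤ := by
  rcases A.eq_empty_or_nonempty with rfl | hAne
  · simp [hz0]
  have hIic (a : I) : z ((preZ z).Iic a) ≠ ⊤ := by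
    have hIic_eq : (preZ z).Iic a = (Finset.univ.filter fun U => z U ≠ ⊤ ∧ a ∈ U).inf id := by
      ext x
      simp [preZ, Finset.mem_inf]
    rw [hIic_eq]
    exact hsub.infClosed.finsetInf_mem ⟨Finset.univ, by simp [hzI]⟩
      fun U hU => (Finset.mem_filter.1 hU).2.1
  have hA_eq : A = A.sup (preZ z).Iic := by
    ext x
    simp only [Finset.mem_sup, Preo.mem_Iic]
    exact ⟨fun hx => ⟨x, hx, (preZ z).le_refl x⟩, fun ⟨a, ha, hxa⟩ => hA ha hxa⟩
  rw [hA_eq]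
  exact hsub.supClosed.finsetSup_mem hAne fun a _ => hIic a

end Submodular

namespace Preo.IsLinExt

variable {I : Type*} [Fintype I] [DecidableEq I] {z : Finset I → WithTop ℝ} {L : Preo I}

lemma ne_top_of_isDownset (hL : (preZ z).IsLinExt L) (hz0 : z ∅ = 0)
    (hzI : z Finset.univ ≠ ⊤) (hsub : Submodular z) {A : Finset I} (hA : L.IsDownset A) :
    z A ≠ ⊤ :=
  ne_top_of_isDownset_preZ hz0 hzI hsub fun _ _ hy hxy => hA hy (hL.2.1 hxy)

lemma sum_le_of_mem_Alin (hL : (preZ z).IsLinExt L) (hz0 : z ∅ = 0)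
    (hzI : z Finset.univ ≠ ⊤) (hsub : Submodular z) {x : I → ℝ} (hx : x ∈ Alin z L)
    {S : Finset I} (hS : z S ≠ ⊤) : ((∑ i ∈ S, x i : ℝ) : WithTop ℝ) ≤ z S := by
  induction S using Finset.strongInduction with
  | _ S ih =>
  rcases S.eq_empty_or_nonempty with rfl | hSne
  · simp [hz0]
  obtain ⟨i, hiS, hmax⟩ := hL.1.exists_max hSne
  have hbub : L.bubble i ⊆ S := hL.bubble_subset (isDownset_preZ_of_ne_top hS) hiS
  have hIio : z (L.Iio i) ≠ ⊤ := hL.ne_top_of_isDownset hz0 hzI hsub (isDownset_Iio i)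
  have hlt : S ∩ L.Iio i ⊂ S := Finset.ssubset_iff_of_subset Finset.inter_subset_left |>.2
    ⟨i, hiS, fun h => (mem_Iio.1 (Finset.mem_inter.1 h).2).2 (L.le_refl i)⟩
  have hinter := ih _ hlt (hsub.infClosed hS hIio)
  rw [← WithTop.add_le_add_iff_right hIio]
  calc ((∑ j ∈ S, x j : ℝ) : WithTop ℝ) + z (L.Iio i)
      = ((∑ j ∈ S ∩ L.Iio i, x j : ℝ) : WithTop ℝ) + ((∑ j ∈ L.Iic i, x j : ℝ) : WithTop ℝ) := by
        rw [← hx _ (isDownset_Iio i), ← WithTop.coe_add, ← WithTop.coe_add,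
          ← Finset.sum_inter_add_sum_sdiff S (L.Iio i), sdiff_Iio_eq_bubble hmax hbub,
          ← Iic_sdiff_Iio, ← Finset.sum_sdiff (Iio_subset_Iic i), add_assoc]
    _ = ((∑ j ∈ S ∩ L.Iio i, x j : ℝ) : WithTop ℝ) + z (S ∪ L.Iio i) := by
        rw [union_Iio_eq_Iic hmax hbub, hx _ (isDownset_Iic i)]
    _ ≤ z S + z (L.Iio i) := by
        grw [hinter, add_comm]
        exact hsub S (L.Iio i)

lemma Alin_subset_EGP (hL : (preZ z).IsLinExt L) (hz0 : z ∅ = 0)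
    (hzI : z Finset.univ ≠ ⊤) (hsub : Submodular z) : Alin z L ⊆ EGP z := by
  refine fun x hx => ⟨hx _ fun a _ _ _ => Finset.mem_univ a, fun A => ?_⟩
  by_cases hA : z A = ⊤
  · exact hA ▸ le_top
  · exact hL.sum_le_of_mem_Alin hz0 hzI hsub hx hA

lemma bubbleIncrement_mem_Alin (hL : (preZ z).IsLinExt L) (hz0 : z ∅ = 0)
    (hzI : z Finset.univ ≠ ⊤) (hsub : Submodular z) :
    L.bubbleIncrement (fun A => (z A).untopD 0) ∈ Alin z L := by
  intro A hA
  rw [hL.1.sum_bubbleIncrement (by simp [hz0]) hA]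
  lift z A to ℝ using hL.ne_top_of_isDownset hz0 hzI hsub hA with r
  rfl

end Preo.IsLinExt

/-- For `z` submodular and `L` a linear extension of `pre(z)`:
`Alin(L, z) ⊆ Π(z)`; in particular `Alin(L, z)` and `Π(z)` are nonempty, and for each `S`
with `z(S) < ∞` the equality `x_S = z(S)` is attained at some point of `Π(z)`. -/
theorem alin_subset_EGP
    {I : Type*} [Fintype I] [DecidableEq I]
    (z : Finset I → WithTop ℝ) (hz0 : z ∅ = 0) (hzI : z Finset.univ ≠ ⊤)
    (hsub : Submodular z) (L : Preo I) (hL : Preo.IsLinExt (preZ z) L) :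
    Alin z L ⊆ EGP z ∧ (Alin z L).Nonempty ∧ (EGP z).Nonempty ∧
      ∀ S : Finset I, z S ≠ ⊤ →
        ∃ x ∈ EGP z, ((∑ i ∈ S, x i : ℝ) : WithTop ℝ) = z S := by
  have hsubset := hL.Alin_subset_EGP hz0 hzI hsub
  have hmem := hL.bubbleIncrement_mem_Alin hz0 hzI hsub
  refine ⟨hsubset, ⟨_, hmem⟩, ⟨_, hsubset hmem⟩, fun S hS => ?_⟩
  have hLS := hL.putBelow (isDownset_preZ_of_ne_top hS)
  have hmemS := hLS.bubbleIncrement_mem_Alin hz0 hzI hsub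
  exact ⟨_, hLS.Alin_subset_EGP hz0 hzI hsub hmemS, hmemS S (L.isDownset_putBelow S)⟩
end

section
/- Let z be a submodular function on the finite set I. The family of subsets A ⊆ I such that x_A = z(A) holds for every x ∈ Π(z) is a topology on I, and it equals the totally disconnected topology ctop(z) whose open sets are the unions of supports of indecomposable factors of z. In particular, if z is indecomposable, then for every A with ∅ ≠ A ≠ I and z(A) < ∞, the set {x ∈ Π(z) : x_A = z(A)} is a proper nonempty face of Π(z). -/
open scoped Classical

/-!
For a fixed `x ∈ Π(z)` the `x`-tight sets form a lattice, by submodularity. If `A` is tight for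
every point of `Π(z)`, then for `j ∉ A` the smallest `x`-tight set containing `j` avoids `A`:
otherwise a little mass can be moved from a point of `A` to `j` without leaving `Π(z)`, which
breaks the tightness of `A`. Hence `Aᶜ` is `x`-tight and `z(A) + z(Aᶜ) = z(I)`, which by
submodularity splits `z` as the product of its restrictions to `A` and `Aᶜ`; such a splitting
cuts no indecomposable factor. Conversely, if `A` is a union of factors then
`z(A) + z(Aᶜ) = z(I) = x_A + x_{Aᶜ}`, so both inequalities `x_A ≤ z(A)`, `x_{Aᶜ} ≤ z(Aᶜ)` are
equalities. Points of `Π(z)` tight on a given finite-valued set come from the greedy algorithm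
along a maximal chain of finite-valued sets through it.
-/

section EqualitySets

open Finset Filter Topology

variable {I : Type*} {z : Finset I → WithTop ℝ}

def IsBaseOn (z : Finset I → WithTop ℝ) (C : Finset I) (x : I → ℝ) : Prop :=
  ((∑ i ∈ C, x i : ℝ) : WithTop ℝ) = z C ∧
    ∀ S ⊆ C, ((∑ i ∈ S, x i : ℝ) : WithTop ℝ) ≤ z S

theorem isBaseOn_empty (hz0 : z ∅ = 0) (x : I → ℝ) : IsBaseOn z ∅ x :=
  ⟨by simp [hz0], fun S hS => by simp [subset_empty.mp hS, hz0]⟩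

theorem isBaseOn_univ_iff [Fintype I] {x : I → ℝ} : IsBaseOn z univ x ↔ x ∈ EGP z :=
  ⟨fun h => ⟨h.1, fun S => h.2 S (subset_univ S)⟩, fun h => ⟨h.1, fun S _ => h.2 S⟩⟩

def tightSets (z : Finset I → WithTop ℝ) (x : I → ℝ) : Set (Finset I) :=
  {S | ((∑ i ∈ S, x i : ℝ) : WithTop ℝ) = z S}

theorem mem_tightSets {x : I → ℝ} {S : Finset I} :
    S ∈ tightSets z x ↔ ((∑ i ∈ S, x i : ℝ) : WithTop ℝ) = z S :=
  Iff.rfl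

variable [DecidableEq I]

theorem Submodular.exists_coe_union_inter (hsub : Submodular z) {S T : Finset I} {s t : ℝ}
    (hS : z S = s) (hT : z T = t) :
    ∃ u v : ℝ, z (S ∪ T) = u ∧ z (S ∩ T) = v ∧ u + v ≤ s + t := by
  have h := hsub S T
  rw [hS, hT, ← WithTop.coe_add] at h
  obtain ⟨hU, hV⟩ := WithTop.add_ne_top.mp (ne_top_of_le_ne_top WithTop.coe_ne_top h)
  obtain ⟨u, hu⟩ := WithTop.ne_top_iff_exists.mp hU
  obtain ⟨v, hv⟩ := WithTop.ne_top_iff_exists.mp hV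
  rw [← hu, ← hv, ← WithTop.coe_add, WithTop.coe_le_coe] at h
  exact ⟨u, v, hu.symm, hv.symm, h⟩

/-- Greedy step: the missing mass `z D - x_D` is put on a single point of `D \ C`. -/
theorem IsBaseOn.exists_extend_of_covering (hsub : Submodular z) {C D : Finset I} {x : I → ℝ}
    (hx : IsBaseOn z C x) (hD : z D ≠ ⊤) (hCD : C ⊂ D)
    (hcov : ∀ S, z S ≠ ⊤ → C ⊆ S → S ⊆ D → S = C ∨ S = D) :
    ∃ y, IsBaseOn z D y ∧ ∀ i ∈ C, y i = x i := by
  obtain ⟨j, hjD, hjC⟩ := exists_of_ssubset hCD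
  obtain ⟨d, hd⟩ := WithTop.ne_top_iff_exists.mp hD
  set y := x + Pi.single j (d - ∑ i ∈ D, x i)
  have hyC : ∀ i ∈ C, y i = x i := fun i hi => by
    simp [y, ne_of_mem_of_not_mem hi hjC]
  have hyD : ∑ i ∈ D, y i = d := by
    simp [y, sum_add_distrib, sum_pi_single', hjD]
  refine ⟨y, ⟨by rw [hyD, hd], fun S hSD => ?_⟩, hyC⟩
  by_cases hS : z S = ⊤
  · simp [hS]
  obtain ⟨s, hs⟩ := WithTop.ne_top_iff_exists.mp hS
  obtain ⟨u, v, hu, hv, huv⟩ := hsub.exists_coe_union_inter hs.symm hx.1.symm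
  rcases hcov (S ∪ C) (hu ▸ WithTop.coe_ne_top) subset_union_right
    (union_subset hSD hCD.subset) with hSC | hSC
  · have hSC : S ⊆ C := union_eq_right.mp hSC
    rw [sum_congr rfl fun i hi => hyC i (hSC hi)]
    exact hx.2 S hSC
  · rw [hSC, ← hd, WithTop.coe_inj] at hu
    have hxv : ∑ i ∈ S ∩ C, x i ≤ v := WithTop.coe_le_coe.mp (hv ▸ hx.2 _ inter_subset_right)
    have hsplit : ∑ i ∈ S ∪ C, y i + ∑ i ∈ S ∩ C, y i = ∑ i ∈ S, y i + ∑ i ∈ C, y i :=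
      sum_union_inter
    rw [hSC, hyD, sum_congr rfl fun i hi => hyC i (mem_inter.mp hi).2,
      sum_congr rfl hyC] at hsplit
    rw [← hs, WithTop.coe_le_coe]
    linarith

theorem IsBaseOn.exists_extend (hsub : Submodular z) {C D : Finset I} {x : I → ℝ}
    (hx : IsBaseOn z C x) (hC : z C ≠ ⊤) (hD : z D ≠ ⊤) (hCD : C ⊆ D) :
    ∃ y, IsBaseOn z D y ∧ ∀ i ∈ C, y i = x i := by
  induction D using Finset.strongInduction with
  | H D ih =>
  obtain rfl | hCD := hCD.eq_or_ssubset
  · exact ⟨x, hx, fun _ _ => rfl⟩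
  obtain ⟨D', hD', hmax⟩ := (D.ssubsets.filter fun S => z S ≠ ⊤ ∧ C ⊆ S).exists_max_image card
    ⟨C, by simp [hCD, hC]⟩
  simp only [mem_filter, mem_ssubsets] at hD' hmax
  obtain ⟨hD'D, hD'top, hCD'⟩ := hD'
  obtain ⟨y', hy', hy'C⟩ := ih D' hD'D hD'top hCD'
  obtain ⟨y, hy, hyD'⟩ := hy'.exists_extend_of_covering hsub hD hD'D fun S hS hD'S hSD => by
    by_cases hSD' : S = D
    · exact Or.inr hSD'
    · exact Or.inl (eq_of_subset_of_card_le hD'S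
        (hmax S ⟨ssubset_of_subset_of_ne hSD hSD', hS, hCD'.trans hD'S⟩)).symm
  exact ⟨y, hy, fun i hi => (hyD' i (hCD' hi)).trans (hy'C i hi)⟩

variable [Fintype I]

theorem exists_mem_EGP_sum_eq (hz0 : z ∅ = 0) (hzI : z univ ≠ ⊤) (hsub : Submodular z)
    {A : Finset I} (hA : z A ≠ ⊤) : ∃ x ∈ EGP z, ((∑ i ∈ A, x i : ℝ) : WithTop ℝ) = z A := by
  obtain ⟨x, hx, -⟩ :=
    (isBaseOn_empty hz0 0).exists_extend hsub (by simp [hz0]) hA (empty_subset A)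
  obtain ⟨y, hy, hyA⟩ := hx.exists_extend hsub hA hzI (subset_univ A)
  exact ⟨y, isBaseOn_univ_iff.mp hy, by rw [sum_congr rfl hyA]; exact hx.1⟩

theorem isSublattice_tightSets (hsub : Submodular z) {x : I → ℝ} (hx : x ∈ EGP z) :
    IsSublattice (tightSets z x) := by
  have key : ∀ S ∈ tightSets z x, ∀ T ∈ tightSets z x,
      S ∪ T ∈ tightSets z x ∧ S ∩ T ∈ tightSets z x := by
    intro S hS T hT
    obtain ⟨u, v, hu, hv, huv⟩ := hsub.exists_coe_union_inter hS.symm hT.symm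
    have hxu : ∑ i ∈ S ∪ T, x i ≤ u := WithTop.coe_le_coe.mp (hu ▸ hx.2 _)
    have hxv : ∑ i ∈ S ∩ T, x i ≤ v := WithTop.coe_le_coe.mp (hv ▸ hx.2 _)
    have hsum : ∑ i ∈ S ∪ T, x i + ∑ i ∈ S ∩ T, x i = ∑ i ∈ S, x i + ∑ i ∈ T, x i :=
      sum_union_inter
    simp only [mem_tightSets, hu, hv, WithTop.coe_inj]
    constructor <;> linarith
  exact ⟨fun S hS T hT => (key S hS T hT).1, fun S hS T hT => (key S hS T hT).2⟩

theorem exists_minimal_mem_tightSets (hsub : Submodular z) {x : I → ℝ} (hx : x ∈ EGP z)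
    (j : I) : ∃ D ∈ tightSets z x, j ∈ D ∧ ∀ S ∈ tightSets z x, j ∈ S → D ⊆ S := by
  set F := univ.filter fun S => S ∈ tightSets z x ∧ j ∈ S
  have hF : F.Nonempty := ⟨univ, mem_filter.mpr ⟨mem_univ _, hx.1, mem_univ j⟩⟩
  refine ⟨F.inf id, (isSublattice_tightSets hsub hx).infClosed.finsetInf_mem hF
    fun S hS => (mem_filter.mp hS).2.1, ?_, fun S hS hjS => inf_le (by simp [F, hS, hjS])⟩
  simp [F, mem_inf]

theorem exists_add_single_sub_single_mem_EGP {x : I → ℝ} (hx : x ∈ EGP z) {i j : I}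
    (hji : ∀ S ∈ tightSets z x, j ∈ S → i ∈ S) :
    ∃ ε > 0, x + Pi.single j ε - Pi.single i ε ∈ EGP z := by
  have hslack : ∀ᶠ ε in 𝓝[>] (0 : ℝ), ∀ S : Finset I, j ∈ S → i ∉ S →
      ((∑ k ∈ S, x k + ε : ℝ) : WithTop ℝ) ≤ z S := by
    refine Filter.eventually_all.2 fun S => ?_
    by_cases h : j ∈ S ∧ i ∉ S
    swap
    · exact Filter.Eventually.of_forall fun ε h1 h2 => absurd ⟨h1, h2⟩ h
    by_cases hS : z S = ⊤
    · simp [hS]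
    obtain ⟨s, hs⟩ := WithTop.ne_top_iff_exists.mp hS
    have hlt : ∑ k ∈ S, x k < s := lt_of_le_of_ne (WithTop.coe_le_coe.mp (hs ▸ hx.2 S))
      fun heq => h.2 (hji S (mem_tightSets.mpr (by rw [← hs, heq])) h.1)
    filter_upwards [nhdsWithin_le_nhds (eventually_lt_nhds (sub_pos.mpr hlt))] with ε hε _ _
    rw [← hs, WithTop.coe_le_coe]
    linarith
  obtain ⟨ε, hε, hεpos⟩ := (hslack.and self_mem_nhdsWithin).exists
  have hsum : ∀ S : Finset I, ∑ k ∈ S, (x + Pi.single j ε - Pi.single i ε : I → ℝ) k =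
      ∑ k ∈ S, x k + (if j ∈ S then ε else 0) - (if i ∈ S then ε else 0) := fun S => by
    simp [sum_add_distrib, sum_sub_distrib, sum_pi_single']
  refine ⟨ε, hεpos, ?_, fun S => ?_⟩
  · rw [hsum]
    simpa using hx.1
  rw [hsum]
  by_cases hjS : j ∈ S
  · by_cases hiS : i ∈ S
    · simpa [hjS, hiS] using hx.2 S
    · simpa [hjS, hiS] using hε S hjS hiS
  · refine le_trans (WithTop.coe_le_coe.mpr ?_) (hx.2 S)
    split_ifs <;> linarith

theorem add_compl_eq_of_forall_mem_tightSets (hz0 : z ∅ = 0) (hzI : z univ ≠ ⊤)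
    (hsub : Submodular z) {A : Finset I} (hA : ∀ x ∈ EGP z, A ∈ tightSets z x) :
    z A + z Aᶜ = z univ := by
  obtain ⟨x, hx, -⟩ := exists_mem_EGP_sum_eq hz0 hzI hsub (A := ∅) (by simp [hz0])
  choose D hDx hjD hDmin using exists_minimal_mem_tightSets hsub hx
  have hDA : ∀ j ∉ A, D j ⊆ Aᶜ := by
    intro j hjA i hiD
    rw [mem_compl]
    intro hiA
    obtain ⟨ε, hε, hy⟩ := exists_add_single_sub_single_mem_EGP hx
      fun S hS hjS => hDmin j S hS hjS hiD
    have := WithTop.coe_inj.mp ((hA _ hy).trans (hA x hx).symm)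
    simp [sum_add_distrib, sum_sub_distrib, sum_pi_single', hjA, hiA] at this
    linarith
  have hAc : Aᶜ = Aᶜ.sup D :=
    le_antisymm (fun j hj => mem_sup.mpr ⟨j, hj, hjD j⟩)
      (Finset.sup_le fun j hj => hDA j (mem_compl.mp hj))
  have hAcx : Aᶜ ∈ tightSets z x := by
    rw [hAc]
    exact sup_induction (by simp [mem_tightSets, hz0])
      (isSublattice_tightSets hsub hx).supClosed fun j _ => hDx j
  rw [← hA x hx, ← hAcx, ← WithTop.coe_add, sum_add_sum_compl]
  exact hx.1

theorem forall_mem_tightSets_of_add_compl_eq (hzI : z univ ≠ ⊤) {A : Finset I}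
    (h : z A + z Aᶜ = z univ) : ∀ x ∈ EGP z, A ∈ tightSets z x := by
  intro x hx
  obtain ⟨hA, hAc⟩ := WithTop.add_ne_top.mp (h ▸ hzI)
  obtain ⟨a, ha⟩ := WithTop.ne_top_iff_exists.mp hA
  obtain ⟨b, hb⟩ := WithTop.ne_top_iff_exists.mp hAc
  have hxA : ∑ i ∈ A, x i ≤ a := WithTop.coe_le_coe.mp (ha ▸ hx.2 A)
  have hxAc : ∑ i ∈ Aᶜ, x i ≤ b := WithTop.coe_le_coe.mp (hb ▸ hx.2 Aᶜ)
  have hsum : ∑ i ∈ A, x i + ∑ i ∈ Aᶜ, x i = a + b := by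
    rw [sum_add_sum_compl, ← WithTop.coe_inj, hx.1, ← h, ← ha, ← hb, WithTop.coe_add]
  rw [mem_tightSets, ← ha, WithTop.coe_inj]
  linarith

theorem Submodular.eq_add_inter_compl (hz0 : z ∅ = 0) (hzI : z univ ≠ ⊤) (hsub : Submodular z)
    {A : Finset I} (h : z A + z Aᶜ = z univ) (E : Finset I) :
    z E = z (E ∩ A) + z (E ∩ Aᶜ) := by
  have hdisj : (E ∩ A) ∩ (E ∩ Aᶜ) = ∅ := disjoint_iff_inter_eq_empty.mp
    ((disjoint_compl_right (a := A)).mono inter_subset_right inter_subset_right)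
  refine le_antisymm ?_ ?_
  · simpa [← inter_union_distrib_left, hdisj, hz0] using hsub (E ∩ A) (E ∩ Aᶜ)
  have h₁ := hsub E A
  have h₂ := hsub (E ∪ A) Aᶜ
  rw [show (E ∪ A) ∪ Aᶜ = univ by simp [union_assoc],
    show (E ∪ A) ∩ Aᶜ = E ∩ Aᶜ by simp [union_inter_distrib_right]] at h₂
  rw [← WithTop.add_le_add_iff_right hzI]
  calc z (E ∩ A) + z (E ∩ Aᶜ) + z univ
      = z (E ∩ A) + (z univ + z (E ∩ Aᶜ)) := by abel
    _ ≤ z (E ∩ A) + (z (E ∪ A) + z Aᶜ) := by gcongr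
    _ = (z (E ∪ A) + z (E ∩ A)) + z Aᶜ := by abel
    _ ≤ (z E + z A) + z Aᶜ := by gcongr
    _ = z E + z univ := by rw [add_assoc, h]

theorem add_compl_eq_of_forall_subset_or_disjoint (hz0 : z ∅ = 0) {fam : Finset (Finset I)}
    (hprod : ∀ E : Finset I, z E = ∑ B ∈ fam, z (E ∩ B)) {A : Finset I}
    (hA : ∀ B ∈ fam, B ⊆ A ∨ Disjoint B A) : z A + z Aᶜ = z univ := by
  rw [hprod A, hprod Aᶜ, hprod univ, ← sum_add_distrib]
  refine sum_congr rfl fun B hB => ?_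
  rcases hA B hB with h | h
  · rw [inter_eq_right.mpr h, disjoint_iff_inter_eq_empty.mp (disjoint_compl_left.mono_right h),
      hz0, add_zero, univ_inter]
  · rw [disjoint_iff_inter_eq_empty.mp h.symm,
      inter_eq_right.mpr (subset_compl_iff_disjoint_right.mpr h), hz0, zero_add, univ_inter]

theorem IndecompOn.subset_or_disjoint {B A : Finset I} (hB : IndecompOn z B)
    (hsplit : ∀ E ⊆ B, z E = z (E ∩ A) + z (E ∩ Aᶜ)) : B ⊆ A ∨ Disjoint B A := by
  by_contra! h
  obtain ⟨b, hbB, hbA⟩ := not_subset.mp h.1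
  refine hB (B ∩ A) (B ∩ Aᶜ) (not_disjoint_iff_nonempty_inter.mp h.2)
    ⟨b, mem_inter.mpr ⟨hbB, mem_compl.mpr hbA⟩⟩ ⟨?_, ?_, fun E hE => ?_⟩
  · exact (disjoint_compl_right (a := A)).mono inter_subset_right inter_subset_right
  · rw [← inter_union_distrib_left, union_compl, inter_univ]
  · rw [← inter_assoc, ← inter_assoc, inter_eq_left.mpr hE]
    exact hsplit E hE

end EqualitySets

theorem isExposed_setOf_eq_of_forall_le {𝕜 E : Type*} [TopologicalSpace 𝕜] [Semiring 𝕜]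
    [PartialOrder 𝕜] [AddCommMonoid E] [TopologicalSpace E] [Module 𝕜 E] {K : Set E}
    {l : StrongDual 𝕜 E} {c : 𝕜} (hle : ∀ x ∈ K, l x ≤ c) :
    IsExposed 𝕜 K {x ∈ K | l x = c} := by
  rintro ⟨y, hyK, hy⟩
  exact ⟨l, Set.ext fun x => and_congr_right fun hx =>
    ⟨fun h y hy => h ▸ hle y hy, fun h => le_antisymm (hle x hx) (hy ▸ h y hyK)⟩⟩

section ExposedFace

variable {I : Type*} [Fintype I] {z : Finset I → WithTop ℝ}

theorem isExposed_EGP_setOf_sum_eq {A : Finset I} (hA : z A ≠ ⊤) :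
    IsExposed ℝ (EGP z) {x ∈ EGP z | ((∑ i ∈ A, x i : ℝ) : WithTop ℝ) = z A} := by
  obtain ⟨a, ha⟩ := WithTop.ne_top_iff_exists.mp hA
  have := isExposed_setOf_eq_of_forall_le (K := EGP z) (c := a)
    (l := ∑ i ∈ A, ContinuousLinearMap.proj i) fun x hx => by
      simpa using WithTop.coe_le_coe.mp (ha ▸ hx.2 A)
  simp_rw [← ha, WithTop.coe_inj]
  simpa using this

end ExposedFace

/-- The family of `A ⊆ I` with `x_A = z(A)` for every `x ∈ Π(z)` is a
topology on `I`, equal to the totally disconnected topology `ctop(z)` whose open sets are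
the unions of the parts of the indecomposable factorization of `z`. In particular, if `z`
is indecomposable, then for every `A` with `∅ ≠ A ≠ I` and `z(A) < ∞`, the set
`{x ∈ Π(z) : x_A = z(A)}` is a proper nonempty (exposed) face of `Π(z)`. -/
theorem equality_sets_form_ctop
    {I : Type*} [Fintype I] [DecidableEq I]
    (z : Finset I → WithTop ℝ) (hz0 : z ∅ = 0) (hzI : z Finset.univ ≠ ⊤)
    (hsub : Submodular z)
    (fam : Finset (Finset I)) (hfam : IsIndecompFactorization z fam) :
    IsTopologyFam {A : Finset I | ∀ x ∈ EGP z, ((∑ i ∈ A, x i : ℝ) : WithTop ℝ) = z A} ∧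
    {A : Finset I | ∀ x ∈ EGP z, ((∑ i ∈ A, x i : ℝ) : WithTop ℝ) = z A} =
      {A : Finset I | ∀ B ∈ fam, B ⊆ A ∨ Disjoint B A} ∧
    (IndecompOn z Finset.univ →
      ∀ A : Finset I, A.Nonempty → A ≠ Finset.univ → z A ≠ ⊤ →
        ({x ∈ EGP z | ((∑ i ∈ A, x i : ℝ) : WithTop ℝ) = z A}).Nonempty ∧
        {x ∈ EGP z | ((∑ i ∈ A, x i : ℝ) : WithTop ℝ) = z A} ≠ EGP z ∧
        IsExposed ℝ (EGP z) {x ∈ EGP z | ((∑ i ∈ A, x i : ℝ) : WithTop ℝ) = z A}) := by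
  obtain ⟨-, -, -, hprod, hblocks⟩ := hfam
  have tight_iff : ∀ A : Finset I,
      (∀ x ∈ EGP z, A ∈ tightSets z x) ↔ z A + z Aᶜ = z Finset.univ := fun A =>
    ⟨add_compl_eq_of_forall_mem_tightSets hz0 hzI hsub, forall_mem_tightSets_of_add_compl_eq hzI⟩
  refine ⟨⟨fun x _ => by simp [hz0], fun x hx => hx.1,
    fun A hA B hB x hx => (isSublattice_tightSets hsub hx).supClosed (hA x hx) (hB x hx),
    fun A hA B hB x hx => (isSublattice_tightSets hsub hx).infClosed (hA x hx) (hB x hx)⟩,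
    Set.ext fun A => (tight_iff A).trans ⟨fun h B hB => ?_, ?_⟩, ?_⟩
  · exact (hblocks B hB).subset_or_disjoint fun E _ => hsub.eq_add_inter_compl hz0 hzI h E
  · exact add_compl_eq_of_forall_subset_or_disjoint hz0 hprod
  intro hind A hAne hAuniv hA
  obtain ⟨y, hy, hyA⟩ := exists_mem_EGP_sum_eq hz0 hzI hsub hA
  refine ⟨⟨y, hy, hyA⟩, fun hface => hind A Aᶜ hAne ?_ ?_, isExposed_EGP_setOf_sum_eq hA⟩
  · exact (Finset.compl_ne_univ_iff_nonempty Aᶜ).mp (by rwa [compl_compl])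
  have hsplit := hsub.eq_add_inter_compl hz0 hzI
    ((tight_iff A).mp fun x hx => ((Set.ext_iff.mp hface x).mpr hx).2)
  exact ⟨disjoint_compl_right, Finset.union_compl A, fun E _ => hsplit E⟩
end

section
/- For any three preorders P, Q, R on a set X with R ⪯ P ⪯ Q, the following equivalence holds: R ⪯ P ∧ Q^op if and only if P ∨ R^op ⪯ Q. Hence the maps F_P(R) = P ∨ R^op and G_P(Q) = P ∧ Q^op form a Galois correspondence between the poset of preorders below P and the poset of preorders above P. -/
open scoped Classical

namespace Preo

variable {X : Type*}

theorem le_meet_iff {P Q S : Preo X} : S.Le (P.meet Q) ↔ S.Le P ∧ S.Le Q :=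
  ⟨fun h => ⟨fun _ _ hab => (h hab).1, fun _ _ hab => (h hab).2⟩,
    fun h _ _ hab => ⟨h.1 hab, h.2 hab⟩⟩

theorem join_le_iff {P Q S : Preo X} : (P.join Q).Le S ↔ P.Le S ∧ Q.Le S := by
  refine ⟨fun h => ⟨fun _ _ hab => h (.single (.inl hab)),
    fun _ _ hab => h (.single (.inr hab))⟩, fun h _ _ hab => ?_⟩
  induction hab with
  | refl => exact S.le_refl _
  | tail _ hstep ih => exact S.le_trans ih (hstep.elim (h.1 ·) (h.2 ·))

theorem le_op_iff_op_le {P Q : Preo X} : P.Le Q.op ↔ P.op.Le Q :=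
  ⟨fun h _ _ hab => h hab, fun h _ _ hab => h hab⟩

end Preo

/-- For preorders `R ⪯ P ⪯ Q` on `X`:
`R ⪯ P ∧ Q^op` iff `P ∨ R^op ⪯ Q`; i.e. `F_P(R) = P ∨ R^op` and `G_P(Q) = P ∧ Q^op`
form a Galois correspondence between the preorders below `P` and those above `P`. -/
theorem galois_correspondence
    {X : Type*} (P Q R : Preo X) (hRP : R.Le P) (hPQ : P.Le Q) :
    R.Le (P.meet Q.op) ↔ (P.join R.op).Le Q := by
  rw [Preo.le_meet_iff, Preo.join_le_iff, Preo.le_op_iff_op_le]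
  exact ⟨fun h => ⟨hPQ, h.2⟩, fun h => ⟨hRP, h.2⟩⟩
end

section
/- Fix a preorder P on X. The maps F_P(R) = P ∨ R^op (for R ⪯ P) and G_P(Q) = P ∧ Q^op (for P ⪯ Q) restrict to mutually inverse order-preserving bijections between underline(P) = {R : R ◁ P} and overline(P) = {Q : P ◀ Q}, where R ◁ P and P ◀ Q correspond to each other precisely when both Q = P ∨ R^op and R = P ∧ Q^op hold. -/
open scoped Classical

/-! Taking opposites is an involution that commutes with `∧` and `∨`. Applied to the defining
identity `R = P ∧ (P^op ∨ R)` of a subdivision it gives `R = P ∧ (P ∨ R^op)^op = G_P (F_P R)`, and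
`P^op ∧ F_P R = R^op`, which is the identity making `F_P R` a contraction; dually for
contractions. -/

namespace Preo

variable {X : Type*}

theorem ext {P Q : Preo X} (h : ∀ a b, P.le a b ↔ Q.le a b) : P = Q := by
  obtain ⟨p, _, _⟩ := P
  obtain ⟨q, _, _⟩ := Q
  obtain rfl : p = q := funext₂ fun a b => propext (h a b)
  rfl

theorem op_op (P : Preo X) : P.op.op = P := rfl

theorem op_meet (P Q : Preo X) : (P.meet Q).op = P.op.meet Q.op := rfl

theorem op_join (P Q : Preo X) : (P.join Q).op = P.op.join Q.op :=
  ext fun _ _ => Relation.reflTransGen_swap.symm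

theorem le_join_left (P Q : Preo X) : P.Le (P.join Q) :=
  fun _ _ h => .single (.inl h)

theorem meet_le_left (P Q : Preo X) : (P.meet Q).Le P :=
  fun _ _ h => h.1

theorem op_le_op {P Q : Preo X} (h : P.Le Q) : P.op.Le Q.op :=
  fun _ _ hab => h hab

theorem join_le_join_left (P : Preo X) {Q Q' : Preo X} (h : Q.Le Q') :
    (P.join Q).Le (P.join Q') :=
  Relation.ReflTransGen.mono (fun _ _ => Or.imp_right (@h _ _))

theorem meet_le_meet_left (P : Preo X) {Q Q' : Preo X} (h : Q.Le Q') :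
    (P.meet Q).Le (P.meet Q') :=
  fun _ _ hab => ⟨hab.1, h hab.2⟩

namespace Subdiv

variable {R P : Preo X}

theorem meet_op_join_op (h : Subdiv R P) : P.meet (P.join R.op).op = R := by
  rw [op_join, op_op]
  exact h.2.symm

theorem contr_join_op (h : Subdiv R P) : Contr P (P.join R.op) := by
  have hop : P.op.meet (P.join R.op) = R.op := by
    simpa only [op_meet, op_op] using congrArg op h.meet_op_join_op
  exact ⟨le_join_left P R.op, by rw [hop]⟩

end Subdiv

namespace Contr

variable {P Q : Preo X}

theorem join_op_meet_op (h : Contr P Q) : P.join (P.meet Q.op).op = Q := by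
  rw [op_meet, op_op]
  exact h.2.symm

theorem subdiv_meet_op (h : Contr P Q) : Subdiv (P.meet Q.op) P := by
  have hop : P.op.join (P.meet Q.op) = Q.op := by
    simpa only [op_join, op_op] using congrArg op h.join_op_meet_op
  exact ⟨meet_le_left P Q.op, by rw [hop]⟩

end Contr

end Preo

/-- For a fixed preorder `P` on `X`, the maps `F_P(R) = P ∨ R^op` and
`G_P(Q) = P ∧ Q^op` restrict to mutually inverse order-preserving bijections between
`underline(P) = {R : R ◁ P}` and `overline(P) = {Q : P ◀ Q}`, where `R ◁ P` and `P ◀ Q`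
correspond to each other precisely when both `Q = P ∨ R^op` and `R = P ∧ Q^op` hold. -/
theorem subdivisions_contractions_bijection
    {X : Type*} (P : Preo X) :
    (∀ R : Preo X, Preo.Subdiv R P →
        Preo.Contr P (P.join R.op) ∧ P.meet (P.join R.op).op = R) ∧
    (∀ Q : Preo X, Preo.Contr P Q →
        Preo.Subdiv (P.meet Q.op) P ∧ P.join (P.meet Q.op).op = Q) ∧
    (∀ R₁ R₂ : Preo X, Preo.Subdiv R₁ P → Preo.Subdiv R₂ P → R₁.Le R₂ →
        (P.join R₁.op).Le (P.join R₂.op)) ∧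
    (∀ Q₁ Q₂ : Preo X, Preo.Contr P Q₁ → Preo.Contr P Q₂ → Q₁.Le Q₂ →
        (P.meet Q₁.op).Le (P.meet Q₂.op)) ∧
    (∀ R Q : Preo X, Preo.Subdiv R P → Preo.Contr P Q →
        (Q = P.join R.op ↔ R = P.meet Q.op)) := by
  refine ⟨fun R hR => ⟨hR.contr_join_op, hR.meet_op_join_op⟩,
    fun Q hQ => ⟨hQ.subdiv_meet_op, hQ.join_op_meet_op⟩,
    fun _ _ _ _ h => P.join_le_join_left (Preo.op_le_op h),
    fun _ _ _ _ h => P.meet_le_meet_left (Preo.op_le_op h),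
    fun R Q hR hQ => ⟨?_, ?_⟩⟩
  · rintro rfl
    exact hR.meet_op_join_op.symm
  · rintro rfl
    exact hQ.join_op_meet_op.symm
end
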